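/- Every sequence in the Fibonacci subshift 𝕂 that starts with 0 is the image under H of some sequence in 𝕂, and every sequence in 𝕂 that starts with 1 is the image under σ∘H of some sequence in 𝕂. In particular 𝕂 ⊆ H(𝕂) ∪ σ(H(𝕂)). -/

import Mathlib

/-- Fibonacci substitution on finite words: H(0)=01, H(1)=0 (0 ↦ `false`, 1 ↦ `true`). -/
def Hword : List Bool → List Bool
  | [] => []
  | false :: t => false :: true :: Hword t
  | true :: t => false :: Hword t

/-- Paper-indexed Fibonacci numbers, shifted by 2: `fibP k = F_{k-2}`, so
`fibP 0 = F_{-2} = 1`, `fibP 1 = F_{-1} = 0`, `fibP 2 = F_0 = 1`, `fibP 3 = F_1 = 1`, … -/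
def fibP : ℕ → ℕ
  | 0 => 1
  | 1 => 0
  | n + 2 => fibP (n + 1) + fibP n

/-- Fibonacci substitution on infinite binary sequences. -/
def Hseq (x : ℕ → Bool) : ℕ → Bool :=
  fun n => (Hword ((List.range (n + 1)).map x)).getD n false

/-- The left shift on infinite binary sequences. -/
def shift (x : ℕ → Bool) : ℕ → Bool := fun n => x (n + 1)

/-!
Cut a sequence into the blocks `01` and `0` of `H`. For the fixed point `ρ = H ρ` the block of
the letter `ρ m` starts at position `|H(ρ₀ ⋯ ρ_{m-1})|`, so `σⁿ ρ = H (σᵐ ρ)` when `n` starts a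
block, i.e. when `ρ n = 0`, and `σⁿ ρ = σ (H (σᵐ ρ))` when `n` is the second letter of a block
`01`, i.e. when `ρ n = 1`. Both descriptions of the orbit pass to its closure because `H` and `σ`
are continuous, the cylinders `{z | z 0 = b}` are open and `{0,1}^ℕ` is compact.
-/

open Set

lemma Hword_append (a b : List Bool) : Hword (a ++ b) = Hword a ++ Hword b := by
  induction a with
  | nil => rfl
  | cons h t ih => cases h <;> simp [Hword, ih]

/-- The position in `H x` at which the image of the letter `x m` starts. -/
def Hpos (x : ℕ → Bool) (m : ℕ) : ℕ := (Hword ((List.range m).map x)).length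

lemma map_range_add {α : Type*} (x : ℕ → α) (m k : ℕ) :
    (List.range (m + k)).map x =
      (List.range m).map x ++ (List.range k).map (fun i => x (m + i)) := by
  rw [List.range_add, List.map_append, List.map_map]
  rfl

lemma Hpos_succ (x : ℕ → Bool) (m : ℕ) :
    Hpos x (m + 1) = Hpos x m + bif x m then 1 else 2 := by
  unfold Hpos
  rw [map_range_add x m 1, Hword_append, List.length_append]
  cases h : x m <;> simp [Hword, h]

lemma Hpos_add_le (x : ℕ → Bool) (m k : ℕ) : Hpos x m + k ≤ Hpos x (m + k) := by
  induction k with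
  | zero => rfl
  | succ k ih =>
    rw [← Nat.add_assoc m k 1, Hpos_succ]
    cases x (m + k) <;> dsimp <;> omega

lemma le_Hpos (x : ℕ → Bool) (m : ℕ) : m ≤ Hpos x m := by
  simpa [Hpos, Hword] using Hpos_add_le x 0 m

lemma exists_eq_Hpos_or_eq_Hpos_add_one (x : ℕ → Bool) (n : ℕ) :
    ∃ m, n = Hpos x m ∨ (n = Hpos x m + 1 ∧ x m = false) := by
  induction n with
  | zero => exact ⟨0, Or.inl rfl⟩
  | succ n ih =>
    obtain ⟨m, h | ⟨h, hx⟩⟩ := ih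
    · cases hx : x m with
      | true => exact ⟨m + 1, Or.inl (by rw [Hpos_succ, hx]; dsimp; omega)⟩
      | false => exact ⟨m, Or.inr ⟨by omega, hx⟩⟩
    · exact ⟨m + 1, Or.inl (by rw [Hpos_succ, hx]; dsimp; omega)⟩

lemma Hseq_eq_getD_of_lt_Hpos (x : ℕ → Bool) {n m : ℕ} (h : n < Hpos x m) :
    Hseq x n = (Hword ((List.range m).map x)).getD n false := by
  have hn : n < Hpos x (n + 1) := (le_Hpos x (n + 1)).trans_lt' n.lt_succ_self
  unfold Hseq
  rcases le_total m (n + 1) with hm | hm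
  · obtain ⟨k, hk⟩ := Nat.exists_eq_add_of_le hm
    rw [hk, map_range_add x m k, Hword_append, List.getD_append _ _ _ _ h]
  · obtain ⟨k, rfl⟩ := Nat.exists_eq_add_of_le hm
    rw [map_range_add x (n + 1) k, Hword_append, List.getD_append _ _ _ _ hn]

lemma iterate_shift_apply (x : ℕ → Bool) (m n : ℕ) : shift^[m] x n = x (m + n) := by
  induction m generalizing x with
  | zero => simp
  | succ m ih => rw [Function.iterate_succ_apply, ih, shift, add_right_comm, add_assoc]

lemma Hseq_iterate_shift (x : ℕ → Bool) (m : ℕ) :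
    Hseq (shift^[m] x) = shift^[Hpos x m] (Hseq x) := by
  funext n
  have hlt : Hpos x m + n < Hpos x (m + (n + 1)) := by
    have := Hpos_add_le x m (n + 1)
    omega
  rw [iterate_shift_apply, Hseq_eq_getD_of_lt_Hpos x hlt, map_range_add x m (n + 1),
    Hword_append, List.getD_append_right _ _ _ _ (Nat.le_add_right (Hpos x m) n)]
  simp only [Hpos, Nat.add_sub_cancel_left, Hseq, funext (iterate_shift_apply x m)]

lemma Hseq_apply_zero (y : ℕ → Bool) : Hseq y 0 = false := by
  cases h : y 0 <;> simp [Hseq, Hword, h]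

lemma Hseq_apply_one (y : ℕ → Bool) (h : y 0 = false) : Hseq y 1 = true := by
  simp [Hseq, List.range_succ, Hword, h]

lemma continuous_Hseq : Continuous Hseq := by
  refine continuous_pi fun n => ?_
  have hfactor : (fun x => Hseq x n) = (fun v : Fin (n + 1) → Bool =>
      (Hword ((List.finRange (n + 1)).map v)).getD n false) ∘ (fun x i => x i) := by
    funext x
    rw [Function.comp_apply, Hseq, ← List.map_coe_finRange_eq_range, List.map_map]
    rfl
  rw [hfactor]
  exact continuous_of_discreteTopology.comp (continuous_pi fun i => continuous_apply i.val)

lemma continuous_shift : Continuous shift :=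
  continuous_pi fun n => continuous_apply (n + 1)

section FixedPoint

variable {ρ : ℕ → Bool} (hρ : Hseq ρ = ρ)
include hρ

lemma iterate_shift_Hpos_of_Hseq_eq_self (m : ℕ) :
    shift^[Hpos ρ m] ρ = Hseq (shift^[m] ρ) := by
  rw [Hseq_iterate_shift, hρ]

lemma apply_Hpos_of_Hseq_eq_self (m : ℕ) : ρ (Hpos ρ m) = false := by
  rw [← add_zero (Hpos ρ m), ← iterate_shift_apply ρ,
    iterate_shift_Hpos_of_Hseq_eq_self hρ, Hseq_apply_zero]

lemma apply_Hpos_add_one_of_Hseq_eq_self {m : ℕ} (hm : ρ m = false) :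
    ρ (Hpos ρ m + 1) = true := by
  rw [← iterate_shift_apply ρ, iterate_shift_Hpos_of_Hseq_eq_self hρ, Hseq_apply_one]
  rwa [iterate_shift_apply]

lemma exists_Hseq_eq_iterate_shift_of_Hseq_eq_self {n : ℕ} (hn : ρ n = false) :
    ∃ m, Hseq (shift^[m] ρ) = shift^[n] ρ := by
  obtain ⟨m, rfl | ⟨rfl, hm⟩⟩ := exists_eq_Hpos_or_eq_Hpos_add_one ρ n
  · exact ⟨m, (iterate_shift_Hpos_of_Hseq_eq_self hρ m).symm⟩
  · simp [apply_Hpos_add_one_of_Hseq_eq_self hρ hm] at hn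

lemma exists_shift_Hseq_eq_iterate_shift_of_Hseq_eq_self {n : ℕ} (hn : ρ n = true) :
    ∃ m, shift (Hseq (shift^[m] ρ)) = shift^[n] ρ := by
  obtain ⟨m, rfl | ⟨rfl, -⟩⟩ := exists_eq_Hpos_or_eq_Hpos_add_one ρ n
  · simp [apply_Hpos_of_Hseq_eq_self hρ] at hn
  · exact ⟨m, by rw [← iterate_shift_Hpos_of_Hseq_eq_self hρ, Function.iterate_succ_apply']⟩

end FixedPoint

lemma IsOpen.inter_closure_subset_image_closure {X Y : Type*} [TopologicalSpace X]
    [CompactSpace X] [TopologicalSpace Y] [T2Space Y] {f : X → Y} (hf : Continuous f)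
    {U S : Set Y} (hU : IsOpen U) {T : Set X} (h : U ∩ S ⊆ f '' T) :
    U ∩ closure S ⊆ f '' closure T :=
  calc U ∩ closure S ⊆ closure (U ∩ S) := hU.inter_closure
    _ ⊆ closure (f '' T) := closure_mono h
    _ = f '' closure T :=
      (image_closure_of_isCompact isClosed_closure.isCompact hf.continuousOn).symm

lemma isOpen_setOf_apply_eq {ι α : Type*} [TopologicalSpace α] [DiscreteTopology α] (i : ι)
    (a : α) : IsOpen {z : ι → α | z i = a} :=
  (isOpen_discrete {a}).preimage (continuous_apply (A := fun _ => α) i)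

/-- every `x ∈ 𝕂` starting with `0` lies in `H(𝕂)`; every `x ∈ 𝕂` starting
with `1` lies in `σ(H(𝕂))`. In particular `𝕂 ⊆ H(𝕂) ∪ σ(H(𝕂))`. -/
theorem K_subset_HK (ρ : ℕ → Bool) (hρ : Hseq ρ = ρ)
    (K : Set (ℕ → Bool)) (hK : K = closure (Set.range fun n => shift^[n] ρ)) :
    (∀ x ∈ K, x 0 = false → ∃ y ∈ K, Hseq y = x) ∧
    (∀ x ∈ K, x 0 = true → ∃ y ∈ K, shift (Hseq y) = x) ∧
    K ⊆ Hseq '' K ∪ (shift ∘ Hseq) '' K := by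
  subst hK
  set O := range fun n => shift^[n] ρ
  have hstart0 : {z | z 0 = false} ∩ O ⊆ Hseq '' O := by
    rintro _ ⟨h0, n, rfl⟩
    simp only [mem_ofPred_eq, iterate_shift_apply, add_zero] at h0
    obtain ⟨m, hm⟩ := exists_Hseq_eq_iterate_shift_of_Hseq_eq_self hρ h0
    exact ⟨_, mem_range_self m, hm⟩
  have hstart1 : {z | z 0 = true} ∩ O ⊆ (shift ∘ Hseq) '' O := by
    rintro _ ⟨h0, n, rfl⟩
    simp only [mem_ofPred_eq, iterate_shift_apply, add_zero] at h0
    obtain ⟨m, hm⟩ := exists_shift_Hseq_eq_iterate_shift_of_Hseq_eq_self hρ h0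
    exact ⟨_, mem_range_self m, hm⟩
  have hK0 := (isOpen_setOf_apply_eq 0 false).inter_closure_subset_image_closure
    continuous_Hseq hstart0
  have hK1 := (isOpen_setOf_apply_eq 0 true).inter_closure_subset_image_closure
    (continuous_shift.comp continuous_Hseq) hstart1
  refine ⟨fun x hx h0 => hK0 ⟨h0, hx⟩, fun x hx h0 => hK1 ⟨h0, hx⟩, fun x hx => ?_⟩
  cases h0 : x 0
  · exact Or.inl (hK0 ⟨h0, hx⟩)
  · exact Or.inr (hK1 ⟨h0, hx⟩)
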